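/- arXiv:1707.07254 — 2 statements merged into one kernel-verified Lean document; each statement's English description precedes it below -/
import Mathlib

section
/- Let H = L²(0,1), (e_i) the orthonormal eigenbasis of the Dirichlet Laplacian A with A e_i = −λ_i e_i, λ_i = π² i². Fix p ∈ (2,∞), α ≥ 0, let f ∈ C_b([0,T]×ℝ;ℝ), and define F^i(t,x) := λ_i^{-1} ∫_0^1 e_i(ξ) f(t,x(ξ)) dξ and β_i(x) := −λ_i ⟨e_i, x⟩_{L²} − α ∫_0^1 e_i(ξ) |x(ξ)|^{p−2} x(ξ) dξ. Then for every ε > 0 there exists C_ε ∈ (0,∞) such that Σ_{i=1}^N β_i(x) F^i(t,x) ≥ −C_ε − ε( ‖x‖²_{L²(0,1)} + α ‖x‖^p_{L^p(0,1)} ) for all x ∈ L^p(0,1), t ∈ [0,T], N ∈ ℕ. -/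
open MeasureTheory Real
open scoped ENNReal

noncomputable section

/-- The Lebesgue measure on `(0,1)`. -/
abbrev mu01 : Measure ℝ := volume.restrict (Set.Ioo (0:ℝ) 1)

/-- The eigenfunctions `e_i(ξ) = √2 sin(iπξ)` of the Dirichlet Laplacian on `(0,1)`. -/
def dirEigen (i : ℕ) (ξ : ℝ) : ℝ := Real.sqrt 2 * Real.sin (i * Real.pi * ξ)

/-- The logarithmic derivative `β_i(x) = −λ_i⟨e_i,x⟩ − α∫_0^1 e_i |x|^{p−2} x` of the
perturbed Gaussian measure, `λ_i = π²i²`. -/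
def betaCoeff (p α : ℝ) (i : ℕ) (x : ℝ → ℝ) : ℝ :=
  -(Real.pi ^ 2 * (i:ℝ) ^ 2) * (∫ ξ in Set.Ioo (0:ℝ) 1, dirEigen i ξ * x ξ)
    - α * ∫ ξ in Set.Ioo (0:ℝ) 1, dirEigen i ξ * |x ξ| ^ (p - 2) * x ξ

/-- The components `F^i(t,x) = λ_i⁻¹ ∫_0^1 e_i(ξ) f(t,x(ξ)) dξ` of the drift
`F(t,x) = (−A)⁻¹ F₀(t,x)`. -/
def driftCoeff (f : ℝ → ℝ → ℝ) (i : ℕ) (t : ℝ) (x : ℝ → ℝ) : ℝ :=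
  (Real.pi ^ 2 * (i:ℝ) ^ 2)⁻¹ * ∫ ξ in Set.Ioo (0:ℝ) 1, dirEigen i ξ * f t (x ξ)

/-!
Write `a_i`, `b_i`, `c_i` for the sine coefficients of `x`, `|x|^{p-2} x` and `f(t, x(·))`,
so that `β_i F^i = -a_i c_i - α λ_i⁻¹ b_i c_i`. For the linear part, Young's inequality termwise
and Bessel's inequality for the orthonormal system `(e_i)` give
`Σ a_i c_i ≤ ε ‖x‖² + ‖f‖²_∞ / (4ε)`. For the nonlinear part, `|b_i| ≤ √2 ∫ |x|^{p-1}`,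
`|c_i| ≤ √2 ‖f‖_∞` and `Σ λ_i⁻¹ ≤ ζ(2)/π² = 1/6`, while pointwise
`|x|^{p-1} ≤ δ |x|^p + δ^{1-p}`; choosing `δ` proportional to `ε` absorbs `∫ |x|^{p-1}` into
`ε ∫ |x|^p` up to a constant.
-/

lemma rpow_sub_one_le_mul_rpow_add {p δ r : ℝ} (hp : 1 ≤ p) (hδ : 0 < δ) (hr : 0 ≤ r) :
    r ^ (p - 1) ≤ δ * r ^ p + δ ^ (1 - p) := by
  rcases le_or_gt r δ⁻¹ with h | h
  · calc r ^ (p - 1) ≤ δ⁻¹ ^ (p - 1) := rpow_le_rpow hr h (by linarith)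
      _ = δ ^ (1 - p) := by rw [inv_rpow hδ.le, ← rpow_neg hδ.le, neg_sub]
      _ ≤ δ * r ^ p + δ ^ (1 - p) := le_add_of_nonneg_left (by positivity)
  · have hr0 : 0 < r := (inv_pos.mpr hδ).trans h
    calc r ^ (p - 1) = r ^ p * r⁻¹ := by rw [rpow_sub_one hr0.ne', div_eq_mul_inv]
      _ ≤ r ^ p * δ := by gcongr; exact inv_le_of_inv_le₀ hδ h.le
      _ ≤ δ * r ^ p + δ ^ (1 - p) := by
        rw [mul_comm]
        exact le_add_of_nonneg_right (by positivity)

lemma abs_abs_rpow_sub_two_mul_self {p : ℝ} (hp : p ≠ 1) (r : ℝ) :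
    |(|r| ^ (p - 2) * r)| = |r| ^ (p - 1) := by
  rw [abs_mul, abs_of_nonneg (rpow_nonneg (abs_nonneg r) _), ← rpow_add_one' (abs_nonneg r)]
  · ring_nf
  · contrapose! hp
    linarith

section

variable {Ω : Type*} [MeasurableSpace Ω] {μ : Measure Ω} {x : Ω → ℝ} {p : ℝ}

lemma inner_toLp_toLp {f g : Ω → ℝ} (hf : MemLp f 2 μ) (hg : MemLp g 2 μ) :
    inner ℝ (hf.toLp f) (hg.toLp g) = ∫ ξ, f ξ * g ξ ∂μ := by
  rw [L2.inner_def]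
  refine integral_congr_ae ?_
  filter_upwards [hf.coeFn_toLp, hg.coeFn_toLp] with ξ hfξ hgξ
  simp [hfξ, hgξ, mul_comm]

lemma integral_le_of_forall_le [IsProbabilityMeasure μ] {h : Ω → ℝ} {C : ℝ}
    (h0 : ∀ ξ, 0 ≤ h ξ) (hC : ∀ ξ, h ξ ≤ C) : ∫ ξ, h ξ ∂μ ≤ C := by
  simpa using integral_mono_of_nonneg (.of_forall h0) (integrable_const (μ := μ) C)
    (.of_forall hC)

lemma integral_abs_rpow_sub_one_le [IsProbabilityMeasure μ] {δ : ℝ} (hp : 1 ≤ p) (hδ : 0 < δ)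
    (hx : Integrable (fun ξ => |x ξ| ^ p) μ) :
    ∫ ξ, |x ξ| ^ (p - 1) ∂μ ≤ δ * (∫ ξ, |x ξ| ^ p ∂μ) + δ ^ (1 - p) :=
  calc ∫ ξ, |x ξ| ^ (p - 1) ∂μ ≤ ∫ ξ, (δ * |x ξ| ^ p + δ ^ (1 - p)) ∂μ :=
        integral_mono_of_nonneg (.of_forall fun _ => by positivity)
          ((hx.const_mul δ).add (integrable_const _))
          (.of_forall fun _ => rpow_sub_one_le_mul_rpow_add hp hδ (abs_nonneg _))
    _ = δ * (∫ ξ, |x ξ| ^ p ∂μ) + δ ^ (1 - p) := by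
        rw [integral_add (hx.const_mul δ) (integrable_const _), integral_const_mul]
        simp

lemma MeasureTheory.MemLp.integrable_abs_rpow [IsFiniteMeasure μ] {q : ℝ} (hq : 0 ≤ q)
    (hqp : q ≤ p) (hx : MemLp x (ENNReal.ofReal p) μ) : Integrable (fun ξ => |x ξ| ^ q) μ := by
  simpa [ENNReal.toReal_ofReal hq] using
    (hx.mono_exponent (ENNReal.ofReal_le_ofReal hqp)).integrable_norm_rpow'

lemma MeasureTheory.MemLp.integrable_abs_rpow_sub_two_mul_self [IsFiniteMeasure μ] (hp : 1 < p)
    (hx : MemLp x (ENNReal.ofReal p) μ) : Integrable (fun ξ => |x ξ| ^ (p - 2) * x ξ) μ := by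
  refine (hx.integrable_abs_rpow (by linarith) (by linarith : p - 1 ≤ p)).mono' ?_
    (.of_forall fun ξ => (abs_abs_rpow_sub_two_mul_self hp.ne' (x ξ)).le)
  exact ((by fun_prop : Measurable fun r : ℝ => |r| ^ (p - 2) * r).comp_aemeasurable
    hx.aemeasurable).aestronglyMeasurable

end

instance : IsProbabilityMeasure mu01 :=
  ⟨by simp [Real.volume_Ioo]⟩

def sineCoeff (g : ℝ → ℝ) (i : ℕ) : ℝ := ∫ ξ in Set.Ioo (0:ℝ) 1, dirEigen i ξ * g ξ

lemma continuous_dirEigen (i : ℕ) : Continuous (dirEigen i) := by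
  unfold dirEigen; fun_prop

lemma abs_dirEigen_le (i : ℕ) (ξ : ℝ) : |dirEigen i ξ| ≤ √2 := by
  rw [dirEigen, abs_mul, abs_of_nonneg (sqrt_nonneg 2)]
  exact mul_le_of_le_one_right (sqrt_nonneg 2) (abs_sin_le_one _)

lemma memLp_dirEigen (i : ℕ) (q : ℝ≥0∞) : MemLp (dirEigen i) q mu01 :=
  (memLp_top_of_bound (continuous_dirEigen i).aestronglyMeasurable √2
    (.of_forall (abs_dirEigen_le i))).mono_exponent le_top

lemma integrable_dirEigen_mul {g : ℝ → ℝ} (hg : Integrable g mu01) (i : ℕ) :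
    Integrable (fun ξ => dirEigen i ξ * g ξ) mu01 :=
  hg.bdd_mul (continuous_dirEigen i).aestronglyMeasurable (.of_forall (abs_dirEigen_le i))

def eigenL2 (i : ℕ) : Lp ℝ 2 mu01 := (memLp_dirEigen i 2).toLp

lemma integral_cos_int_mul_pi (k : ℤ) :
    ∫ ξ in (0:ℝ)..1, cos (k * π * ξ) = if k = 0 then 1 else 0 := by
  split_ifs with hk
  · simp [hk]
  · have hkπ : (k * π : ℝ) ≠ 0 := mul_ne_zero (by exact_mod_cast hk) pi_ne_zero
    simp [intervalIntegral.integral_comp_mul_left cos hkπ, integral_cos, sin_int_mul_pi]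

lemma integral_dirEigen_mul_dirEigen {i j : ℕ} (hi : i ≠ 0) :
    ∫ ξ in Set.Ioo (0:ℝ) 1, dirEigen i ξ * dirEigen j ξ = if i = j then 1 else 0 := by
  have hprod : ∀ ξ, dirEigen i ξ * dirEigen j ξ
      = cos (((i - j : ℤ) : ℝ) * π * ξ) - cos (((i + j : ℤ) : ℝ) * π * ξ) := by
    intro ξ
    have h2 : √2 * √2 = 2 := mul_self_sqrt zero_le_two
    push_cast
    rw [show ((i:ℝ) - j) * π * ξ = i * π * ξ - j * π * ξ by ring,
      show ((i:ℝ) + j) * π * ξ = i * π * ξ + j * π * ξ by ring, ← two_mul_sin_mul_sin,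
      dirEigen, dirEigen]
    linear_combination sin (i * π * ξ) * sin (j * π * ξ) * h2
  rw [← integral_Ioc_eq_integral_Ioo, ← intervalIntegral.integral_of_le zero_le_one]
  simp_rw [hprod]
  rw [intervalIntegral.integral_sub
    ((by fun_prop : Continuous _).intervalIntegrable _ _)
    ((by fun_prop : Continuous _).intervalIntegrable _ _), integral_cos_int_mul_pi,
    integral_cos_int_mul_pi]
  simp [sub_eq_zero]
  omega

lemma orthonormal_eigenL2 : Orthonormal ℝ (fun i : {i : ℕ // i ≠ 0} => eigenL2 i) := by
  rw [orthonormal_iff_ite]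
  rintro ⟨i, hi⟩ ⟨j, -⟩
  rw [eigenL2, eigenL2, inner_toLp_toLp, integral_dirEigen_mul_dirEigen hi]
  simp

lemma sum_sineCoeff_sq_le {g : ℝ → ℝ} (hg : MemLp g 2 mu01) {s : Finset ℕ} (hs : 0 ∉ s) :
    ∑ i ∈ s, sineCoeff g i ^ 2 ≤ ∫ ξ in Set.Ioo (0:ℝ) 1, g ξ ^ 2 := by
  have hbessel := orthonormal_eigenL2.sum_inner_products_le (hg.toLp g)
    (s := s.subtype (· ≠ 0))
  rw [← real_inner_self_eq_norm_sq, inner_toLp_toLp] at hbessel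
  simp only [eigenL2, inner_toLp_toLp, Real.norm_eq_abs, sq_abs] at hbessel
  rw [Finset.sum_subtype_of_mem (fun i => (∫ ξ in Set.Ioo (0:ℝ) 1, dirEigen i ξ * g ξ) ^ 2)
    (fun i hi => ne_of_mem_of_not_mem hi hs)] at hbessel
  simpa only [sineCoeff, sq] using hbessel

lemma abs_sineCoeff_le {g : ℝ → ℝ} (hg : Integrable g mu01) (i : ℕ) :
    |sineCoeff g i| ≤ √2 * ∫ ξ in Set.Ioo (0:ℝ) 1, |g ξ| :=
  calc |sineCoeff g i| ≤ ∫ ξ in Set.Ioo (0:ℝ) 1, |dirEigen i ξ * g ξ| :=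
        abs_integral_le_integral_abs
    _ ≤ ∫ ξ in Set.Ioo (0:ℝ) 1, √2 * |g ξ| :=
        integral_mono (integrable_dirEigen_mul hg i).abs (hg.abs.const_mul _) fun ξ => by
          rw [abs_mul]
          exact mul_le_mul_of_nonneg_right (abs_dirEigen_le i ξ) (abs_nonneg _)
    _ = √2 * ∫ ξ in Set.Ioo (0:ℝ) 1, |g ξ| := integral_const_mul _ _

-- `s` may contain `0`: that term is `0⁻¹ = 0`, as is the `n = 0` term of `hasSum_zeta_two`.
lemma sum_inv_eigenvalue_le (s : Finset ℕ) : ∑ i ∈ s, (π ^ 2 * (i:ℝ) ^ 2)⁻¹ ≤ 1 / 6 :=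
  calc ∑ i ∈ s, (π ^ 2 * (i:ℝ) ^ 2)⁻¹ = (π ^ 2)⁻¹ * ∑ i ∈ s, 1 / (i:ℝ) ^ 2 := by
        simp only [Finset.mul_sum, mul_inv, one_div]
    _ ≤ (π ^ 2)⁻¹ * (π ^ 2 / 6) := by
        gcongr
        exact sum_le_hasSum s (fun i _ => by positivity) hasSum_zeta_two
    _ = 1 / 6 := by field_simp

lemma sum_sineCoeff_mul_le {x g : ℝ → ℝ} (hx : MemLp x 2 mu01) (hg : MemLp g 2 mu01)
    {s : Finset ℕ} (hs : 0 ∉ s) {ε : ℝ} (hε : 0 < ε) :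
    ∑ i ∈ s, sineCoeff x i * sineCoeff g i
      ≤ ε * (∫ ξ in Set.Ioo (0:ℝ) 1, x ξ ^ 2)
        + (4 * ε)⁻¹ * ∫ ξ in Set.Ioo (0:ℝ) 1, g ξ ^ 2 := by
  have young : ∀ a c : ℝ, a * c ≤ ε * a ^ 2 + (4 * ε)⁻¹ * c ^ 2 := fun a c => by
    have : ε * a ^ 2 + (4 * ε)⁻¹ * c ^ 2 - a * c = (4 * ε)⁻¹ * (2 * ε * a - c) ^ 2 := by
      field_simp
      ring
    nlinarith [this, mul_nonneg (inv_nonneg.mpr (by positivity : (0:ℝ) ≤ 4 * ε))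
      (sq_nonneg (2 * ε * a - c))]
  calc ∑ i ∈ s, sineCoeff x i * sineCoeff g i
      ≤ ∑ i ∈ s, (ε * sineCoeff x i ^ 2 + (4 * ε)⁻¹ * sineCoeff g i ^ 2) :=
        Finset.sum_le_sum fun i _ => young _ _
    _ = ε * ∑ i ∈ s, sineCoeff x i ^ 2 + (4 * ε)⁻¹ * ∑ i ∈ s, sineCoeff g i ^ 2 := by
        rw [Finset.sum_add_distrib, Finset.mul_sum, Finset.mul_sum]
    _ ≤ _ := by
        gcongr
        exacts [sum_sineCoeff_sq_le hx hs, sum_sineCoeff_sq_le hg hs]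

lemma abs_sum_inv_eigenvalue_mul_sineCoeff_le {φ g : ℝ → ℝ} (hφ : Integrable φ mu01)
    (hg : Integrable g mu01) (s : Finset ℕ) :
    |∑ i ∈ s, (π ^ 2 * (i:ℝ) ^ 2)⁻¹ * (sineCoeff φ i * sineCoeff g i)|
      ≤ (∫ ξ in Set.Ioo (0:ℝ) 1, |φ ξ|) * (∫ ξ in Set.Ioo (0:ℝ) 1, |g ξ|) / 3 := by
  set A := ∫ ξ in Set.Ioo (0:ℝ) 1, |φ ξ|
  set G := ∫ ξ in Set.Ioo (0:ℝ) 1, |g ξ|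
  have hA : 0 ≤ A := integral_nonneg fun _ => abs_nonneg _
  have hG : 0 ≤ G := integral_nonneg fun _ => abs_nonneg _
  have hterm : ∀ i, |sineCoeff φ i * sineCoeff g i| ≤ 2 * (A * G) := fun i =>
    calc |sineCoeff φ i * sineCoeff g i| ≤ (√2 * A) * (√2 * G) := by
          rw [abs_mul]
          exact mul_le_mul (abs_sineCoeff_le hφ i) (abs_sineCoeff_le hg i) (abs_nonneg _)
            (by positivity)
      _ = 2 * (A * G) := by rw [mul_mul_mul_comm, mul_self_sqrt zero_le_two]
  calc |∑ i ∈ s, (π ^ 2 * (i:ℝ) ^ 2)⁻¹ * (sineCoeff φ i * sineCoeff g i)|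
      ≤ ∑ i ∈ s, (π ^ 2 * (i:ℝ) ^ 2)⁻¹ * (2 * (A * G)) := by
        refine (Finset.abs_sum_le_sum_abs _ _).trans (Finset.sum_le_sum fun i _ => ?_)
        rw [abs_mul, abs_of_nonneg (by positivity)]
        gcongr
        exact hterm i
    _ = (∑ i ∈ s, (π ^ 2 * (i:ℝ) ^ 2)⁻¹) * (2 * (A * G)) := (Finset.sum_mul _ _ _).symm
    _ ≤ 1 / 6 * (2 * (A * G)) := by
        gcongr
        exact sum_inv_eigenvalue_le s
    _ = A * G / 3 := by ring

lemma sum_inv_eigenvalue_mul_sineCoeff_nonlinear_le {x g : ℝ → ℝ} {p C δ : ℝ} (hp : 1 < p)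
    (hx : MemLp x (ENNReal.ofReal p) mu01) (hg : Integrable g mu01) (hgC : ∀ ξ, |g ξ| ≤ C)
    (hδ : 0 < δ) (s : Finset ℕ) :
    ∑ i ∈ s, (π ^ 2 * (i:ℝ) ^ 2)⁻¹
        * (sineCoeff (fun ξ => |x ξ| ^ (p - 2) * x ξ) i * sineCoeff g i)
      ≤ C / 3 * (δ * (∫ ξ in Set.Ioo (0:ℝ) 1, |x ξ| ^ p) + δ ^ (1 - p)) := by
  have hφ : ∫ ξ in Set.Ioo (0:ℝ) 1, |(|x ξ| ^ (p - 2) * x ξ)|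
      = ∫ ξ in Set.Ioo (0:ℝ) 1, |x ξ| ^ (p - 1) :=
    integral_congr_ae (.of_forall fun ξ => abs_abs_rpow_sub_two_mul_self hp.ne' (x ξ))
  have hG : ∫ ξ in Set.Ioo (0:ℝ) 1, |g ξ| ≤ C :=
    integral_le_of_forall_le (fun _ => abs_nonneg _) hgC
  have hC : 0 ≤ C := (abs_nonneg _).trans (hgC 0)
  calc _ ≤ |∑ i ∈ s, (π ^ 2 * (i:ℝ) ^ 2)⁻¹
        * (sineCoeff (fun ξ => |x ξ| ^ (p - 2) * x ξ) i * sineCoeff g i)| := le_abs_self _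
    _ ≤ (∫ ξ in Set.Ioo (0:ℝ) 1, |x ξ| ^ (p - 1)) * (∫ ξ in Set.Ioo (0:ℝ) 1, |g ξ|)
          / 3 := by
        rw [← hφ]
        exact abs_sum_inv_eigenvalue_mul_sineCoeff_le
          (hx.integrable_abs_rpow_sub_two_mul_self hp) hg s
    _ ≤ (δ * (∫ ξ in Set.Ioo (0:ℝ) 1, |x ξ| ^ p) + δ ^ (1 - p)) * C / 3 := by
        gcongr
        exact integral_abs_rpow_sub_one_le hp.le hδ (hx.integrable_abs_rpow (by linarith) le_rfl)
    _ = C / 3 * (δ * (∫ ξ in Set.Ioo (0:ℝ) 1, |x ξ| ^ p) + δ ^ (1 - p)) := by ring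

lemma betaCoeff_mul_driftCoeff (p α : ℝ) (f : ℝ → ℝ → ℝ) {i : ℕ} (hi : i ≠ 0)
    (t : ℝ) (x : ℝ → ℝ) :
    betaCoeff p α i x * driftCoeff f i t x
      = -(sineCoeff x i * sineCoeff (fun ξ => f t (x ξ)) i)
        - α * ((π ^ 2 * (i:ℝ) ^ 2)⁻¹ * (sineCoeff (fun ξ => |x ξ| ^ (p - 2) * x ξ) i
          * sineCoeff (fun ξ => f t (x ξ)) i)) := by
  have hlam : π ^ 2 * (i:ℝ) ^ 2 ≠ 0 := by positivity
  simp only [betaCoeff, driftCoeff, sineCoeff, mul_assoc]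
  field_simp

theorem logderivative_pairing_lower_bound_for_reaction_drift_general
    (T : ℝ) (p : ℝ) (hp : 2 < p) (α : ℝ) (hα : 0 ≤ α)
    (f : ℝ → ℝ → ℝ)
    (hfc : Continuous (Function.uncurry f))
    (hfb : ∃ C, ∀ t r, |f t r| ≤ C) :
    ∀ ε > (0:ℝ), ∃ Cε > (0:ℝ), ∀ x : ℝ → ℝ,
      MemLp x (ENNReal.ofReal p) mu01 →
      ∀ t ∈ Set.Icc (0:ℝ) T, ∀ N : ℕ,
      ∑ i ∈ Finset.Icc 1 N, betaCoeff p α i x * driftCoeff f i t x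
        ≥ -Cε - ε * ((∫ ξ in Set.Ioo (0:ℝ) 1, (x ξ) ^ 2)
            + α * ∫ ξ in Set.Ioo (0:ℝ) 1, |x ξ| ^ p) := by
  obtain ⟨C, hC, hfC⟩ : ∃ C > 0, ∀ t r, |f t r| ≤ C := by
    obtain ⟨C, hfC⟩ := hfb
    exact ⟨max C 1, by positivity, fun t r => (hfC t r).trans (le_max_left _ _)⟩
  intro ε hε
  set δ := 3 * ε / C with hδ
  refine ⟨C ^ 2 / (4 * ε) + α * (C / 3 * δ ^ (1 - p)), by positivity, fun x hx t _ N => ?_⟩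
  have hs : 0 ∉ Finset.Icc 1 N := by simp
  rw [Finset.sum_congr rfl fun i hi =>
      betaCoeff_mul_driftCoeff p α f (ne_of_mem_of_not_mem hi hs) t x,
    Finset.sum_sub_distrib, Finset.sum_neg_distrib, ← Finset.mul_sum]
  set g : ℝ → ℝ := fun ξ => f t (x ξ)
  have hgC : ∀ ξ, |g ξ| ≤ C := fun ξ => hfC t (x ξ)
  have hg : MemLp g ∞ mu01 := memLp_top_of_bound
    ((hfc.comp (Continuous.prodMk_right t)).comp_aestronglyMeasurable hx.aestronglyMeasurable)
    C (.of_forall hgC)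
  have hg2 : ∫ ξ in Set.Ioo (0:ℝ) 1, g ξ ^ 2 ≤ C ^ 2 :=
    integral_le_of_forall_le (fun _ => sq_nonneg _)
      fun ξ => by simpa only [sq_abs] using pow_le_pow_left₀ (abs_nonneg _) (hgC ξ) 2
  have hlin := sum_sineCoeff_mul_le (hx.mono_exponent (by simpa using hp.le))
    (hg.mono_exponent le_top) hs hε
  have hnonlin := sum_inv_eigenvalue_mul_sineCoeff_nonlinear_le (by linarith) hx
    (hg.integrable le_top) hgC (by positivity : 0 < δ) (Finset.Icc 1 N)
  rw [mul_add, ← mul_assoc, show C / 3 * δ = ε by rw [hδ]; field_simp] at hnonlin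
  have hαnonlin := mul_le_mul_of_nonneg_left hnonlin hα
  have hg2ε : (4 * ε)⁻¹ * ∫ ξ in Set.Ioo (0:ℝ) 1, g ξ ^ 2 ≤ C ^ 2 / (4 * ε) := by
    rw [div_eq_inv_mul]
    gcongr
  linarith

/-- **Example 2.10, Claim 2.** For every `ε > 0` there exists `C_ε` such that
`Σ_{i=1}^N β_i(x) F^i(t,x) ≥ −C_ε − ε(‖x‖²_{L²} + α‖x‖^p_{L^p})` for all `x ∈ L^p(0,1)`,
`t ∈ [0,T]`, `N ∈ ℕ`. -/
theorem logderivative_pairing_lower_bound_for_reaction_drift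
    (T : ℝ) (hT : 0 < T) (p : ℝ) (hp : 2 < p) (α : ℝ) (hα : 0 ≤ α)
    (f : ℝ → ℝ → ℝ)
    (hfc : Continuous (Function.uncurry f))
    (hfb : ∃ C, ∀ t r, |f t r| ≤ C) :
    ∀ ε > (0:ℝ), ∃ Cε > (0:ℝ), ∀ x : ℝ → ℝ,
      MemLp x (ENNReal.ofReal p) mu01 →
      ∀ t ∈ Set.Icc (0:ℝ) T, ∀ N : ℕ,
      ∑ i ∈ Finset.Icc 1 N, betaCoeff p α i x * driftCoeff f i t x
        ≥ -Cε - ε * ((∫ ξ in Set.Ioo (0:ℝ) 1, (x ξ) ^ 2)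
            + α * ∫ ξ in Set.Ioo (0:ℝ) 1, |x ξ| ^ p) :=
  logderivative_pairing_lower_bound_for_reaction_drift_general T p hp α hα f hfc hfb
end
end

section
/- Let H be a real separable Hilbert space, γ a finite nonnegative Borel measure on H, Y ⊆ H a dense linear subspace, and let ρ : H → [0,∞) be Borel measurable with ∫_H ρ ln ρ dγ < ∞. Then there exist nonnegative ρ_n ∈ FC¹_b, n ∈ ℕ, such that ρ_n → ρ in L¹(H,γ) and sup_n ∫_H ρ_n ln ρ_n dγ < ∞. -/
/-!
Truncating `ρ` at height `n + 1` does not increase `∫ ρ log ρ` (the tangent of `s log s` at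
`n + 1` lies below the graph) and converges to `ρ` in `L¹` by dominated convergence. A Borel
function with values in `[0, M]` is `L¹`-close to a continuous one with values in `[0, M]`
(density of bounded continuous functions, then clamping), hence to its composition with the
orthogonal projection onto the span of finitely many vectors of the dense subspace `Y`, hence to
a mollification of the resulting function of finitely many coordinates, which lies in `FC¹_b`.
On `[0, M]` one has `a log a ≤ b log b + 1 + (1 + log M) |a - b|`, so an `L¹` error below
`1 / ((n + 1) (1 + log (n + 1)))` for the `n`-th truncation keeps the entropies bounded.
-/

open MeasureTheory Real Filter
open scoped ENNReal Topology RealInnerProductSpace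

noncomputable section

/-- Cylindrical `C¹_b` functions on a Hilbert space, with directions in `Y`. -/
def IsFC1b {H : Type*} [NormedAddCommGroup H] [InnerProductSpace ℝ H]
    (Y : Submodule ℝ H) (f : H → ℝ) : Prop :=
  ∃ (N : ℕ) (h : Fin N → H) (F : (Fin N → ℝ) → ℝ),
    (∀ i, h i ∈ Y) ∧ ContDiff ℝ 1 F ∧
    (∃ C : ℝ, ∀ y, |F y| ≤ C ∧ ‖fderiv ℝ F y‖ ≤ C) ∧
    f = fun x => F (fun i => ⟪h i, x⟫)

namespace Real

theorem le_mul_log_add_one {s : ℝ} (hs : 0 ≤ s) : s ≤ s * log s + 1 := by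
  linarith [InformationTheory.klFun_nonneg hs, InformationTheory.klFun_apply s]

theorem mul_log_le_mul_log_add_mul_sub {a b : ℝ} (ha : 0 < a) (hb : 0 ≤ b) :
    a * log a ≤ b * log b + (1 + log a) * (a - b) := by
  rcases hb.eq_or_lt with rfl | hb
  · simp only [log_zero, mul_zero, zero_add, sub_zero]
    nlinarith
  · have h := mul_le_mul_of_nonneg_left (log_le_sub_one_of_pos (div_pos ha hb)) hb.le
    rw [log_div ha.ne' hb.ne', mul_sub_one, mul_div_cancel₀ _ hb.ne'] at h
    linarith

theorem mul_log_min_le {s M : ℝ} (hs : 0 ≤ s) (hM : 1 ≤ M) :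
    min s M * log (min s M) ≤ s * log s := by
  rcases le_total s M with h | h
  · rw [min_eq_left h]
  · rw [min_eq_right h]
    have := mul_log_le_mul_log_add_mul_sub (zero_lt_one.trans_le hM) hs
    nlinarith [log_nonneg hM]

theorem mul_log_le_mul_log_add_one_add_mul_abs_sub {a b M : ℝ} (ha : 0 ≤ a) (haM : a ≤ M)
    (hb : 0 ≤ b) (hM : 1 ≤ M) :
    a * log a ≤ b * log b + 1 + (1 + log M) * |a - b| := by
  have hlogM : 0 ≤ 1 + log M := by linarith [log_nonneg hM]
  have hb' : 0 ≤ b * log b + 1 := hb.trans (le_mul_log_add_one hb)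
  rcases le_total a 1 with h | h
  · nlinarith [mul_log_nonpos ha h, abs_nonneg (a - b)]
  · have hloga : log a ≤ log M := log_le_log (by linarith) haM
    have hslope : (1 + log a) * (a - b) ≤ (1 + log M) * |a - b| :=
      (mul_le_mul_of_nonneg_left (le_abs_self _) (by linarith [log_nonneg h])).trans
        (mul_le_mul_of_nonneg_right (by linarith) (abs_nonneg _))
    linarith [mul_log_le_mul_log_add_mul_sub (zero_lt_one.trans_le h) hb]

end Real

section Integral

variable {α : Type*} [MeasurableSpace α] {μ : Measure α}

theorem Continuous.integrable_comp_of_mem_Icc [IsFiniteMeasure μ] {φ : ℝ → ℝ} (hφ : Continuous φ)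
    {f : α → ℝ} (hf : AEStronglyMeasurable f μ) {a b : ℝ} (hab : ∀ x, f x ∈ Set.Icc a b) :
    Integrable (fun x => φ (f x)) μ := by
  obtain ⟨C, hC⟩ := isCompact_Icc.exists_bound_of_continuousOn hφ.continuousOn
  exact .of_bound (hφ.comp_aestronglyMeasurable hf) C (ae_of_all _ fun x => hC _ (hab x))

theorem integrable_of_mem_Icc [IsFiniteMeasure μ] {f : α → ℝ} (hf : AEStronglyMeasurable f μ)
    {a b : ℝ} (hab : ∀ x, f x ∈ Set.Icc a b) : Integrable f μ :=
  continuous_id.integrable_comp_of_mem_Icc hf hab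

theorem integral_abs_sub_le_add {f g h : α → ℝ} (hf : Integrable f μ) (hg : Integrable g μ)
    (hh : Integrable h μ) :
    ∫ x, |f x - h x| ∂μ ≤ ∫ x, |f x - g x| ∂μ + ∫ x, |g x - h x| ∂μ := by
  have hfg : Integrable (fun x => |f x - g x|) μ := (hf.sub hg).abs
  have hgh : Integrable (fun x => |g x - h x|) μ := (hg.sub hh).abs
  exact (integral_mono (hf.sub hh).abs (hfg.add hgh) fun x => abs_sub_le _ _ _).trans_eq
    (integral_add hfg hgh)

theorem tendsto_integral_abs_sub_of_dominated {u : ℕ → α → ℝ} {v G : α → ℝ}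
    (hu : ∀ n, AEStronglyMeasurable (u n) μ) (hv : AEStronglyMeasurable v μ)
    (hG : Integrable G μ) (hbound : ∀ n, ∀ᵐ x ∂μ, |u n x - v x| ≤ G x)
    (hlim : ∀ᵐ x ∂μ, Tendsto (fun n => u n x) atTop (𝓝 (v x))) :
    Tendsto (fun n => ∫ x, |u n x - v x| ∂μ) atTop (𝓝 0) := by
  have h := tendsto_integral_of_dominated_convergence (F := fun n x => |u n x - v x|)
    (f := fun _ => 0) G (fun n => ((hu n).sub hv).norm) hG (fun n => by simpa using hbound n)
    (hlim.mono fun x hx => by simpa using (hx.sub_const (v x)).abs)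
  rwa [integral_zero] at h

theorem tendsto_integral_abs_sub_of_mem_Icc [IsFiniteMeasure μ] {u : ℕ → α → ℝ} {v : α → ℝ}
    {M : ℝ} (hu : ∀ n, AEStronglyMeasurable (u n) μ) (hv : AEStronglyMeasurable v μ)
    (huM : ∀ n x, u n x ∈ Set.Icc 0 M) (hvM : ∀ x, v x ∈ Set.Icc 0 M)
    (hlim : ∀ x, Tendsto (fun n => u n x) atTop (𝓝 (v x))) :
    Tendsto (fun n => ∫ x, |u n x - v x| ∂μ) atTop (𝓝 0) :=
  tendsto_integral_abs_sub_of_dominated hu hv (integrable_const M)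
    (fun n => ae_of_all _ fun x =>
      abs_sub_le_of_nonneg_of_le (huM n x).1 (huM n x).2 (hvM x).1 (hvM x).2)
    (ae_of_all _ hlim)

end Integral

theorem exists_continuous_mem_Icc_integral_abs_sub_lt {α : Type*} [TopologicalSpace α]
    [NormalSpace α] [MeasurableSpace α] [BorelSpace α] {μ : Measure α} [μ.WeaklyRegular]
    {f : α → ℝ} (hf : Integrable f μ) {M : ℝ} (hM : 0 ≤ M) (hfM : ∀ x, f x ∈ Set.Icc 0 M)
    {ε : ℝ} (hε : 0 < ε) :
    ∃ g : α → ℝ, Continuous g ∧ (∀ x, g x ∈ Set.Icc 0 M) ∧ ∫ x, |g x - f x| ∂μ < ε := by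
  obtain ⟨g₀, hg₀, hg₀i⟩ := hf.exists_boundedContinuous_integral_sub_le (half_pos hε)
  refine ⟨fun x => Set.projIcc 0 M hM (g₀ x), by fun_prop, fun x => (Set.projIcc 0 M hM _).2, ?_⟩
  have hle : ∀ x, |(Set.projIcc 0 M hM (g₀ x) : ℝ) - f x| ≤ ‖f x - g₀ x‖ := fun x =>
    calc |(Set.projIcc 0 M hM (g₀ x) : ℝ) - f x|
        = |(Set.projIcc 0 M hM (g₀ x) : ℝ) - Set.projIcc 0 M hM (f x)| := by
          rw [Set.projIcc_of_mem hM (hfM x)]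
      _ ≤ |g₀ x - f x| := Set.abs_projIcc_sub_projIcc hM
      _ = ‖f x - g₀ x‖ := by rw [Real.norm_eq_abs, abs_sub_comm]
  calc ∫ x, |(Set.projIcc 0 M hM (g₀ x) : ℝ) - f x| ∂μ ≤ ∫ x, ‖f x - g₀ x‖ ∂μ :=
        integral_mono_of_nonneg (ae_of_all _ fun _ => abs_nonneg _) (hf.sub hg₀i).norm
          (ae_of_all _ hle)
    _ < ε := hg₀.trans_lt (half_lt_self hε)

theorem Submodule.exists_seq_sum_inner_smul_tendsto {H : Type*} [NormedAddCommGroup H]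
    [InnerProductSpace ℝ H] [TopologicalSpace.SeparableSpace H] (Y : Submodule ℝ H)
    (hY : Dense (Y : Set H)) :
    ∃ (d : ℕ → ℕ) (e : ∀ n, Fin (d n) → H), (∀ n i, e n i ∈ Y) ∧
      ∀ x, Tendsto (fun n => ∑ i, ⟪e n i, x⟫ • e n i) atTop (𝓝 x) := by
  classical
  have : SecondCountableTopology H := UniformSpace.secondCountable_of_separable H
  obtain ⟨u, hu⟩ := TopologicalSpace.exists_dense_seq Y
  let U : ℕ → Submodule ℝ H := fun n =>
    span ℝ ((Finset.range (n + 1)).image (fun k => (u k : H)) : Set H)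
  have hUY : ∀ n, U n ≤ Y := fun n => span_le.2 <| by
    rw [Finset.coe_image]; exact Set.image_subset_iff.2 fun k _ => (u k).2
  have hUmono : Monotone U := fun m n hmn => span_mono <| by gcongr
  have hUdense : ⊤ ≤ (⨆ n, U n).topologicalClosure := by
    rw [top_le_iff, ← dense_iff_topologicalClosure_eq_top]
    refine (hY.denseRange_val.comp hu continuous_subtype_val).mono ?_
    rintro _ ⟨k, rfl⟩
    exact le_iSup U k (subset_span (Finset.mem_coe.2 (Finset.mem_image_of_mem _ (by simp))))
  refine ⟨fun n => Module.finrank ℝ (U n), fun n i => stdOrthonormalBasis ℝ (U n) i,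
    fun n i => hUY n (Submodule.coe_mem _), fun x => ?_⟩
  refine (starProjection_tendsto_self U hUmono x hUdense).congr fun n => ?_
  rw [starProjection_apply, (stdOrthonormalBasis ℝ (U n)).orthogonalProjectionOnto_apply_eq_sum]
  simp only [Submodule.coe_sum, Submodule.coe_smul]

open scoped Convolution

theorem norm_convolution_le_of_norm_le {𝕜 G E E' F : Type*} [NontriviallyNormedField 𝕜]
    [NormedAddCommGroup E] [NormedAddCommGroup E'] [NormedAddCommGroup F] [NormedSpace 𝕜 E]
    [NormedSpace 𝕜 E'] [NormedSpace 𝕜 F] [NormedSpace ℝ F] [Sub G] [MeasurableSpace G]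
    {μ : Measure G} (L : E →L[𝕜] E' →L[𝕜] F) {f : G → E} {g : G → E'} (hf : Integrable f μ)
    {C : ℝ} (hg : ∀ y, ‖g y‖ ≤ C) (x : G) :
    ‖(f ⋆[L, μ] g) x‖ ≤ ‖L‖ * (∫ t, ‖f t‖ ∂μ) * C := by
  rw [convolution_def, ← integral_const_mul, ← integral_mul_const]
  refine norm_integral_le_of_norm_le ((hf.norm.const_mul _).mul_const _) (ae_of_all _ fun t => ?_)
  calc ‖L (f t) (g (x - t))‖ ≤ ‖L‖ * ‖f t‖ * ‖g (x - t)‖ := L.le_opNorm₂ _ _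
    _ ≤ ‖L‖ * ‖f t‖ * C := by gcongr; exact hg _

namespace ContDiffBump

variable {G : Type*} [NormedAddCommGroup G] [NormedSpace ℝ G] [FiniteDimensional ℝ G]
  [MeasurableSpace G] [BorelSpace G] {μ : Measure G} [μ.IsAddHaarMeasure]
  (φ : ContDiffBump (0 : G)) {F : G → ℝ}

theorem normed_convolution_mem_Icc (hF : Continuous F) {M : ℝ} (hFM : ∀ y, F y ∈ Set.Icc 0 M)
    (x : G) : (φ.normed μ ⋆[ContinuousLinearMap.lsmul ℝ ℝ, μ] F) x ∈ Set.Icc 0 M := by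
  simp only [convolution_def, ContinuousLinearMap.lsmul_apply, smul_eq_mul]
  have hint : Integrable (fun t => φ.normed μ t * F (x - t)) μ :=
    φ.integrable_normed.mul_bdd (by fun_prop) (c := M) (ae_of_all _ fun t =>
      (Real.norm_of_nonneg (hFM _).1).trans_le (hFM _).2)
  refine ⟨integral_nonneg fun t => mul_nonneg (φ.nonneg_normed t) (hFM _).1, ?_⟩
  calc ∫ t, φ.normed μ t * F (x - t) ∂μ ≤ ∫ t, φ.normed μ t * M ∂μ :=
        integral_mono hint (φ.integrable_normed.mul_const M)
          fun t => mul_le_mul_of_nonneg_left (hFM _).2 (φ.nonneg_normed t)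
    _ = M := by rw [integral_mul_const, φ.integral_normed, one_mul]

theorem exists_bound_fderiv_normed_convolution (hF : Continuous F) {B : ℝ}
    (hFB : ∀ y, ‖F y‖ ≤ B) :
    ∃ C, ∀ x, ‖fderiv ℝ (φ.normed μ ⋆[ContinuousLinearMap.lsmul ℝ ℝ, μ] F) x‖ ≤ C := by
  have hint : Integrable (fderiv ℝ (φ.normed μ)) μ :=
    (φ.contDiff_normed.continuous_fderiv one_ne_zero).integrable_of_hasCompactSupport
      (HasCompactSupport.fderiv (𝕜 := ℝ) φ.hasCompactSupport_normed)
  exact ⟨_, fun x => by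
    rw [(φ.hasCompactSupport_normed.hasFDerivAt_convolution_left _ φ.contDiff_normed
      hF.locallyIntegrable x).fderiv]
    exact norm_convolution_le_of_norm_le _ hint hFB x⟩

end ContDiffBump

theorem exists_seq_contDiff_tendsto_of_continuous_of_mem_Icc {G : Type*} [NormedAddCommGroup G]
    [NormedSpace ℝ G] [FiniteDimensional ℝ G] {F : G → ℝ} (hF : Continuous F) {M : ℝ}
    (hFM : ∀ y, F y ∈ Set.Icc 0 M) :
    ∃ Fk : ℕ → G → ℝ, (∀ k, ContDiff ℝ 1 (Fk k)) ∧ (∀ k y, Fk k y ∈ Set.Icc 0 M) ∧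
      (∀ k, ∃ C, ∀ y, ‖fderiv ℝ (Fk k) y‖ ≤ C) ∧
      ∀ y, Tendsto (fun k => Fk k y) atTop (𝓝 (F y)) := by
  borelize G
  let φ : ℕ → ContDiffBump (0 : G) := fun k =>
    ⟨1 / ((k : ℝ) + 2), 1 / ((k : ℝ) + 1), by positivity,
      one_div_lt_one_div_of_lt (by positivity) (by linarith)⟩
  refine ⟨fun k => (φ k).normed Measure.addHaar ⋆[ContinuousLinearMap.lsmul ℝ ℝ, Measure.addHaar] F,
    fun k => (φ k).hasCompactSupport_normed.contDiff_convolution_left _ (φ k).contDiff_normed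
      hF.locallyIntegrable,
    fun k => (φ k).normed_convolution_mem_Icc hF hFM,
    fun k => (φ k).exists_bound_fderiv_normed_convolution hF
      fun y => (Real.norm_of_nonneg (hFM y).1).trans_le (hFM y).2,
    fun y => ContDiffBump.convolution_tendsto_right_of_continuous
      tendsto_one_div_add_atTop_nhds_zero_nat hF y⟩

section Cylindrical

variable {H : Type*} [NormedAddCommGroup H] [InnerProductSpace ℝ H] {Y : Submodule ℝ H}

theorem IsFC1b.continuous {f : H → ℝ} (hf : IsFC1b Y f) : Continuous f := by
  obtain ⟨N, h, F, -, hF, -, rfl⟩ := hf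
  exact hF.continuous.comp (by fun_prop)

theorem isFC1b_of_mem_Icc {N : ℕ} {h : Fin N → H} (hY : ∀ i, h i ∈ Y) {F : (Fin N → ℝ) → ℝ}
    (hF : ContDiff ℝ 1 F) {M C : ℝ} (hFM : ∀ y, F y ∈ Set.Icc 0 M)
    (hF' : ∀ y, ‖fderiv ℝ F y‖ ≤ C) : IsFC1b Y fun x => F fun i => ⟪h i, x⟫ :=
  ⟨N, h, F, hY, hF, ⟨max M C, fun y =>
    ⟨(abs_of_nonneg (hFM y).1).trans_le ((hFM y).2.trans (le_max_left _ _)),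
      (hF' y).trans (le_max_right _ _)⟩⟩, rfl⟩

variable [TopologicalSpace.SeparableSpace H] [MeasurableSpace H] [BorelSpace H]

theorem exists_isFC1b_mem_Icc_integral_abs_sub_lt (γ : Measure H) [IsFiniteMeasure γ]
    (hY : Dense (Y : Set H)) {f : H → ℝ} (hf : AEStronglyMeasurable f γ) {M : ℝ} (hM : 0 ≤ M)
    (hfM : ∀ x, f x ∈ Set.Icc 0 M) {ε : ℝ} (hε : 0 < ε) :
    ∃ g : H → ℝ, IsFC1b Y g ∧ (∀ x, g x ∈ Set.Icc 0 M) ∧ ∫ x, |g x - f x| ∂γ < ε := by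
  have hε3 : 0 < ε / 3 := by positivity
  have hint {u : H → ℝ} (hu : Continuous u) (huM : ∀ x, u x ∈ Set.Icc 0 M) : Integrable u γ :=
    integrable_of_mem_Icc hu.aestronglyMeasurable huM
  obtain ⟨g, hg, hgM, hgf⟩ :=
    exists_continuous_mem_Icc_integral_abs_sub_lt (integrable_of_mem_Icc hf hfM) hM hfM hε3
  obtain ⟨d, e, he, hPe⟩ := Y.exists_seq_sum_inner_smul_tendsto hY
  have hP (n : ℕ) : Continuous fun x : H => ∑ i, ⟪e n i, x⟫ • e n i := by fun_prop
  obtain ⟨n, hn⟩ := ((tendsto_integral_abs_sub_of_mem_Icc (μ := γ)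
    (fun n => (hg.comp (hP n)).aestronglyMeasurable) hg.aestronglyMeasurable (fun n x => hgM _)
    hgM fun x => (hg.tendsto x).comp (hPe x)).eventually (gt_mem_nhds hε3)).exists
  -- `g (Pₙ x) = G (⟪e n i, x⟫)ᵢ` with `G` continuous on `Fin (d n) → ℝ`; mollify `G`
  obtain ⟨Gk, hGk, hGkM, hGk', hGklim⟩ :=
    exists_seq_contDiff_tendsto_of_continuous_of_mem_Icc
      (F := fun y : Fin (d n) → ℝ => g (∑ i, y i • e n i)) (by fun_prop) fun y => hgM _
  have hcoord : Continuous fun x : H => fun i => ⟪e n i, x⟫ := by fun_prop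
  obtain ⟨k, hk⟩ := ((tendsto_integral_abs_sub_of_mem_Icc (μ := γ)
    (fun k => ((hGk k).continuous.comp hcoord).aestronglyMeasurable)
    (hg.comp (hP n)).aestronglyMeasurable (fun k x => hGkM k _) (fun x => hgM _)
    fun x => hGklim _).eventually (gt_mem_nhds hε3)).exists
  obtain ⟨C, hC⟩ := hGk' k
  refine ⟨_, isFC1b_of_mem_Icc (he n) (hGk k) (hGkM k) hC, fun x => hGkM k _, ?_⟩
  have hGki := hint ((hGk k).continuous.comp hcoord) fun x => hGkM k _
  have hgPi := hint (hg.comp (hP n)) fun x => hgM _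
  have hfi := integrable_of_mem_Icc hf hfM
  calc _ ≤ _ := integral_abs_sub_le_add hGki hgPi hfi
    _ ≤ _ := add_le_add_right (integral_abs_sub_le_add hgPi (hint hg hgM) hfi) _
    _ < ε := by linarith

end Cylindrical

section Entropy

variable {α : Type*} [MeasurableSpace α] {μ : Measure α}

theorem integrable_of_integrable_mul_log [IsFiniteMeasure μ] {ρ : α → ℝ}
    (hρ : AEStronglyMeasurable ρ μ) (hρ0 : ∀ x, 0 ≤ ρ x)
    (hent : Integrable (fun x => ρ x * log (ρ x)) μ) : Integrable ρ μ :=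
  (hent.add (integrable_const 1)).mono' hρ <| ae_of_all _ fun x => by
    rw [Real.norm_of_nonneg (hρ0 x)]; exact Real.le_mul_log_add_one (hρ0 x)

theorem integral_mul_log_min_le [IsFiniteMeasure μ] {ρ : α → ℝ} (hρ : AEStronglyMeasurable ρ μ)
    (hρ0 : ∀ x, 0 ≤ ρ x) (hent : Integrable (fun x => ρ x * log (ρ x)) μ) {M : ℝ} (hM : 1 ≤ M) :
    ∫ x, min (ρ x) M * log (min (ρ x) M) ∂μ ≤ ∫ x, ρ x * log (ρ x) ∂μ :=
  integral_mono
    (Real.continuous_mul_log.integrable_comp_of_mem_Icc (hρ.inf aestronglyMeasurable_const)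
      fun x => ⟨le_min (hρ0 x) (zero_le_one.trans hM), min_le_right _ _⟩)
    hent fun x => Real.mul_log_min_le (hρ0 x) hM

theorem integral_mul_log_le_of_mem_Icc [IsFiniteMeasure μ] {f g : α → ℝ}
    (hf : AEStronglyMeasurable f μ) (hg : AEStronglyMeasurable g μ) {M : ℝ} (hM : 1 ≤ M)
    (hfM : ∀ x, f x ∈ Set.Icc 0 M) (hgM : ∀ x, g x ∈ Set.Icc 0 M) :
    ∫ x, f x * log (f x) ∂μ ≤
      ∫ x, g x * log (g x) ∂μ + μ.real Set.univ + (1 + log M) * ∫ x, |f x - g x| ∂μ := by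
  have hφg := Real.continuous_mul_log.integrable_comp_of_mem_Icc hg hgM
  have hφg1 : Integrable (fun x => g x * log (g x) + 1) μ := hφg.add (integrable_const 1)
  have hfg : Integrable (fun x => (1 + log M) * |f x - g x|) μ :=
    ((integrable_of_mem_Icc hf hfM).sub (integrable_of_mem_Icc hg hgM)).abs.const_mul _
  calc ∫ x, f x * log (f x) ∂μ
      ≤ ∫ x, (g x * log (g x) + 1 + (1 + log M) * |f x - g x|) ∂μ :=
        integral_mono (Real.continuous_mul_log.integrable_comp_of_mem_Icc hf hfM)
          (hφg1.add hfg) fun x =>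
          Real.mul_log_le_mul_log_add_one_add_mul_abs_sub (hfM x).1 (hfM x).2 (hgM x).1 hM
    _ = _ := by
      rw [integral_add hφg1 hfg, integral_add hφg (integrable_const 1), integral_const_mul,
        integral_const, smul_eq_mul, mul_one]

theorem tendsto_integral_abs_min_sub {ρ : α → ℝ} (hρ : Integrable ρ μ) (hρ0 : ∀ x, 0 ≤ ρ x)
    {M : ℕ → ℝ} (hM0 : ∀ n, 0 ≤ M n) (hM : Tendsto M atTop atTop) :
    Tendsto (fun n => ∫ x, |min (ρ x) (M n) - ρ x| ∂μ) atTop (𝓝 0) :=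
  tendsto_integral_abs_sub_of_dominated (fun _ => hρ.1.inf aestronglyMeasurable_const) hρ.1 hρ
    (fun n => ae_of_all _ fun x => abs_sub_le_of_nonneg_of_le (le_min (hρ0 x) (hM0 n))
      (min_le_left _ _) (hρ0 x) le_rfl)
    (ae_of_all _ fun x => tendsto_const_nhds.congr' <|
      (hM.eventually_ge_atTop (ρ x)).mono fun _ hn => (min_eq_left hn).symm)

end Entropy

theorem entropy_bounded_cylindrical_approximation_general
    {H : Type*} [NormedAddCommGroup H] [InnerProductSpace ℝ H]
    [TopologicalSpace.SeparableSpace H] [MeasurableSpace H] [BorelSpace H]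
    (γ : Measure H) [IsFiniteMeasure γ]
    (Y : Submodule ℝ H) (hYdense : Dense (Y : Set H))
    (ρ : H → ℝ) (hρmeas : Measurable ρ) (hρpos : ∀ x, 0 ≤ ρ x)
    (hent : Integrable (fun x => ρ x * Real.log (ρ x)) γ) :
    ∃ ρn : ℕ → H → ℝ,
      (∀ n, IsFC1b Y (ρn n)) ∧ (∀ n x, 0 ≤ ρn n x) ∧
      Tendsto (fun n => ∫ x, |ρn n x - ρ x| ∂γ) atTop (𝓝 0) ∧
      ∃ C : ℝ, ∀ n, ∫ x, ρn n x * Real.log (ρn n x) ∂γ ≤ C := by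
  have hρint := integrable_of_integrable_mul_log hρmeas.aestronglyMeasurable hρpos hent
  set M : ℕ → ℝ := fun n => n + 1
  have hM (n : ℕ) : 1 ≤ M n := by simp [M]
  have hM0 (n : ℕ) : 0 < M n := zero_lt_one.trans_le (hM n)
  have hMtop : Tendsto M atTop atTop :=
    tendsto_atTop_add_const_right _ 1 tendsto_natCast_atTop_atTop
  have hlog (n : ℕ) : 0 < 1 + log (M n) := by linarith [log_nonneg (hM n)]
  have htrunc (n : ℕ) (x : H) : min (ρ x) (M n) ∈ Set.Icc 0 (M n) :=
    ⟨le_min (hρpos x) (hM0 n).le, min_le_right _ _⟩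
  have htrunc_meas (n : ℕ) : AEStronglyMeasurable (fun x => min (ρ x) (M n)) γ :=
    (hρmeas.min measurable_const).aestronglyMeasurable
  choose ρn hρnFC hρnM hρnclose using fun n =>
    exists_isFC1b_mem_Icc_integral_abs_sub_lt γ hYdense (htrunc_meas n) (hM0 n).le
      (htrunc n) (ε := (M n)⁻¹ / (1 + log (M n)))
      (div_pos (inv_pos.2 (hM0 n)) (hlog n))
  have herr (n : ℕ) : (1 + log (M n)) * ∫ x, |ρn n x - min (ρ x) (M n)| ∂γ < (M n)⁻¹ :=
    (lt_div_iff₀' (hlog n)).1 (hρnclose n)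
  have hclose (n : ℕ) : ∫ x, |ρn n x - min (ρ x) (M n)| ∂γ ≤ (M n)⁻¹ :=
    (le_mul_of_one_le_left (integral_nonneg fun _ => abs_nonneg _)
      (by linarith [log_nonneg (hM n)])).trans (herr n).le
  refine ⟨ρn, hρnFC, fun n x => (hρnM n x).1, ?_, ∫ x, ρ x * log (ρ x) ∂γ + γ.real Set.univ + 1,
    fun n => ?_⟩
  · refine squeeze_zero (fun n => integral_nonneg fun _ => abs_nonneg _) (fun n =>
      (integral_abs_sub_le_add (integrable_of_mem_Icc (hρnFC n).continuous.aestronglyMeasurable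
        (hρnM n)) (integrable_of_mem_Icc (htrunc_meas n) (htrunc n)) hρint).trans
      (add_le_add_left (hclose n) _)) ?_
    simpa using (tendsto_inv_atTop_zero.comp hMtop).add
      (tendsto_integral_abs_min_sub hρint hρpos (fun n => (hM0 n).le) hMtop)
  · linarith [herr n, inv_le_one_of_one_le₀ (hM n),
      integral_mul_log_min_le hρmeas.aestronglyMeasurable hρpos hent (hM n),
      integral_mul_log_le_of_mem_Icc (hρnFC n).continuous.aestronglyMeasurable (htrunc_meas n)
        (hM n) (hρnM n) (htrunc n)]

/-- **Corollary C.3.** If `ρ ≥ 0` is Borel with finite entropy `∫ ρ ln ρ dγ < ∞`, then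
there are nonnegative cylindrical `ρ_n ∈ FC¹_b` with `ρ_n → ρ` in `L¹(H,γ)` and
`sup_n ∫ ρ_n ln ρ_n dγ < ∞`. -/
theorem entropy_bounded_cylindrical_approximation
    {H : Type*} [NormedAddCommGroup H] [InnerProductSpace ℝ H] [CompleteSpace H]
    [TopologicalSpace.SeparableSpace H] [MeasurableSpace H] [BorelSpace H]
    (γ : Measure H) [IsFiniteMeasure γ]
    (Y : Submodule ℝ H) (hYdense : Dense (Y : Set H))
    (ρ : H → ℝ) (hρmeas : Measurable ρ) (hρpos : ∀ x, 0 ≤ ρ x)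
    (hent : Integrable (fun x => ρ x * Real.log (ρ x)) γ) :
    ∃ ρn : ℕ → H → ℝ,
      (∀ n, IsFC1b Y (ρn n)) ∧ (∀ n x, 0 ≤ ρn n x) ∧
      Tendsto (fun n => ∫ x, |ρn n x - ρ x| ∂γ) atTop (𝓝 0) ∧
      ∃ C : ℝ, ∀ n, ∫ x, ρn n x * Real.log (ρn n x) ∂γ ≤ C :=
  entropy_bounded_cylindrical_approximation_general γ Y hYdense ρ hρmeas hρpos hent
end
end
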